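/- First conditional-entropy estimate: let κ = (κ_1,…,κ_L) with L ≥ 2, and suppose that for each ℓ ∈ [L], τ_ℓ ≥ 0 is a valid log-Sobolev constant for the multislice Ω_{κ^{∖ℓ}}. Then for every f : Ω_κ → [0,∞), Σ_{ℓ=1}^{L} (1 − κ_ℓ/n)·E[Ent(f | ξ_ℓ)] ≤ (L−2)·max_{ℓ∈[L]} τ_ℓ · 𝔈_κ(√f, √f). -/

import Mathlib

/-!
Fix a colour `ℓ` and a `κ_ℓ`-set `A`. Writing the remaining colours on `Aᶜ` in increasing order
identifies the fiber `{ξ_ℓ = A}` with `Ω_{κ^{∖ℓ}}`, transpositions inside `Aᶜ` becoming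
transpositions of the smaller multislice. Hence the log-Sobolev inequality of `Ω_{κ^{∖ℓ}}` bounds
`Ent(f | ξ_ℓ = A)` by `τ_ℓ / (2(n - κ_ℓ))` times the energy of `√f` along transpositions of two
positions not coloured `ℓ`. All fibers have the same size, so averaging over `A` gives the full
expectation of that energy, and the weight `1 - κ_ℓ/n` turns `τ_ℓ / (2(n - κ_ℓ))` into `τ_ℓ / (2n)`.
Finally, a transposition of two positions of distinct colours is counted for exactly `L - 2`
colours `ℓ`, while a transposition of two equal colours fixes `ω`; summing over `ℓ` gives
`(L - 2) 𝔈(√f, √f)`.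
-/

open Finset

namespace Multislice

/-- The multislice `Ω_κ`: sequences of length `n` with values in `Fin L`
in which color `ℓ` appears exactly `κ ℓ` times. -/
def slice (L n : ℕ) (κ : Fin L → ℕ) : Finset (Fin n → Fin L) :=
  Finset.univ.filter fun ω => ∀ ℓ, (Finset.univ.filter fun i => ω i = ℓ).card = κ ℓ

/-- Average of `f` with respect to the uniform distribution on `Ω`. -/
noncomputable def expect {L n : ℕ} (Ω : Finset (Fin n → Fin L))
    (f : (Fin n → Fin L) → ℝ) : ℝ :=
  (∑ ω ∈ Ω, f ω) / Ω.card

/-- Discrete gradient `(∇^{ij} f)(ω) = f(ω^{ij}) - f(ω)`. -/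
noncomputable def grad {L n : ℕ} (i j : Fin n) (f : (Fin n → Fin L) → ℝ)
    (ω : Fin n → Fin L) : ℝ :=
  f (ω ∘ Equiv.swap i j) - f ω

/-- The Dirichlet form `𝔈_κ(f,g) = (1/(2n)) Σ_{i<j} E[(∇^{ij}f)(∇^{ij}g)]`. -/
noncomputable def dirichlet {L n : ℕ} (Ω : Finset (Fin n → Fin L))
    (f g : (Fin n → Fin L) → ℝ) : ℝ :=
  (1 / (2 * (n : ℝ))) *
    ∑ p ∈ Finset.univ.filter (fun p : Fin n × Fin n => p.1 < p.2),
      expect Ω fun ω => grad p.1 p.2 f ω * grad p.1 p.2 g ω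

/-- The weighted Dirichlet form `𝔈^G_κ(f,g) = (1/2) Σ_{i<j} G_{ij} E[(∇^{ij}f)(∇^{ij}g)]`. -/
noncomputable def wDirichlet {L n : ℕ} (G : Fin n → Fin n → ℝ)
    (Ω : Finset (Fin n → Fin L)) (f g : (Fin n → Fin L) → ℝ) : ℝ :=
  (1 / 2) *
    ∑ p ∈ Finset.univ.filter (fun p : Fin n × Fin n => p.1 < p.2),
      G p.1 p.2 * expect Ω fun ω => grad p.1 p.2 f ω * grad p.1 p.2 g ω

/-- Entropy `Ent(f) = E[f log f] - E[f] log E[f]` (note `Real.log 0 = 0`). -/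
noncomputable def entropy {L n : ℕ} (Ω : Finset (Fin n → Fin L))
    (f : (Fin n → Fin L) → ℝ) : ℝ :=
  expect Ω (fun ω => f ω * Real.log (f ω)) - expect Ω f * Real.log (expect Ω f)

/-- Variance `Var(f) = E[f²] - (E[f])²`. -/
noncomputable def variance {L n : ℕ} (Ω : Finset (Fin n → Fin L))
    (f : (Fin n → Fin L) → ℝ) : ℝ :=
  expect Ω (fun ω => f ω ^ 2) - (expect Ω f) ^ 2

/-- The edge boundary `∂A` of `A ⊆ Ω`: edges (recorded as pairs with first endpoint
in `A` and second endpoint in `Ω \ A`) between `A` and its complement, where two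
states are adjacent when they differ in exactly two coordinates. -/
def edgeBoundary {L n : ℕ} (Ω A : Finset (Fin n → Fin L)) :
    Finset ((Fin n → Fin L) × (Fin n → Fin L)) :=
  (A ×ˢ (Ω \ A)).filter fun p => (Finset.univ.filter fun i => p.1 i ≠ p.2 i).card = 2

/-- The `ℓ`-colored region `ξ_ℓ(ω) = {i : ω i = ℓ}`. -/
def xi {L n : ℕ} (ℓ : Fin L) (ω : Fin n → Fin L) : Finset (Fin n) :=
  Finset.univ.filter fun i => ω i = ℓ

/-- The parameter `κ^{∖ℓ}` obtained from `κ` by removing the `ℓ`-th entry. -/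
def removeIdx {L : ℕ} (κ : Fin L → ℕ) (ℓ : Fin L) (m : Fin (L - 1)) : ℕ :=
  if (m : ℕ) < (ℓ : ℕ) then κ ⟨m, by have := m.isLt; omega⟩
  else κ ⟨(m : ℕ) + 1, by have := m.isLt; omega⟩

def IsLogSobolevConst {L n : ℕ} (Ω : Finset (Fin n → Fin L)) (τ : ℝ) : Prop :=
  ∀ g : (Fin n → Fin L) → ℝ, (∀ ω, 0 ≤ g ω) →
    entropy Ω g ≤ τ * dirichlet Ω (fun ω => Real.sqrt (g ω)) (fun ω => Real.sqrt (g ω))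

-- Typechecks because `Fin (k + 1 - 1)` and `Fin k` are definitionally equal.
lemma removeIdx_eq_succAbove {k : ℕ} (κ : Fin (k + 1) → ℕ) (ℓ : Fin (k + 1)) :
    removeIdx κ ℓ = fun j : Fin k => κ (ℓ.succAbove j) := by
  funext j
  unfold removeIdx
  split_ifs with h <;> congr 1 <;> ext <;> simp [Fin.succAbove, Fin.lt_def, h]

section Expect

variable {L n : ℕ} {Ω : Finset (Fin n → Fin L)}

lemma expect_congr {F G : (Fin n → Fin L) → ℝ} (h : ∀ ω ∈ Ω, F ω = G ω) :
    expect Ω F = expect Ω G := by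
  rw [expect, expect, sum_congr rfl h]

lemma expect_nonneg {F : (Fin n → Fin L) → ℝ} (h : ∀ ω ∈ Ω, 0 ≤ F ω) : 0 ≤ expect Ω F :=
  div_nonneg (sum_nonneg h) (Nat.cast_nonneg _)

lemma expect_const_mul (c : ℝ) (F : (Fin n → Fin L) → ℝ) :
    expect Ω (fun ω => c * F ω) = c * expect Ω F := by
  rw [expect, expect, ← mul_sum, mul_div_assoc]

lemma expect_sum {ι : Type*} (t : Finset ι) (F : ι → (Fin n → Fin L) → ℝ) :
    expect Ω (fun ω => ∑ i ∈ t, F i ω) = ∑ i ∈ t, expect Ω (F i) := by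
  rw [expect, sum_comm, sum_div]
  rfl

lemma expect_ite (P : Prop) [Decidable P] (F : (Fin n → Fin L) → ℝ) :
    expect Ω (fun ω => if P then F ω else 0) = if P then expect Ω F else 0 := by
  split_ifs <;> simp [expect]

lemma expect_image {m k : ℕ} {s : Finset (Fin m → Fin k)} {Φ : (Fin m → Fin k) → Fin n → Fin L}
    (hΦ : Set.InjOn Φ s) (F : (Fin n → Fin L) → ℝ) :
    expect (s.image Φ) F = expect s (fun g => F (Φ g)) := by
  rw [expect, expect, sum_image hΦ, card_image_of_injOn hΦ]

lemma entropy_image {m k : ℕ} {s : Finset (Fin m → Fin k)} {Φ : (Fin m → Fin k) → Fin n → Fin L}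
    (hΦ : Set.InjOn Φ s) (f : (Fin n → Fin L) → ℝ) :
    entropy (s.image Φ) f = entropy s (fun g => f (Φ g)) := by
  rw [entropy, entropy, expect_image hΦ, expect_image hΦ]

lemma average_expect_fiber {ι : Type*} [DecidableEq ι] {t : Finset ι}
    {p : (Fin n → Fin L) → ι} (hp : ∀ ω ∈ Ω, p ω ∈ t) {c : ℕ}
    (hc : ∀ a ∈ t, (Ω.filter fun ω => p ω = a).card = c) (F : (Fin n → Fin L) → ℝ) :
    1 / (t.card : ℝ) * ∑ a ∈ t, expect (Ω.filter fun ω => p ω = a) F = expect Ω F := by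
  have hcard : Ω.card = t.card * c := by
    rw [card_eq_sum_card_fiberwise hp, sum_congr rfl hc, sum_const, smul_eq_mul]
  simp only [expect]
  rw [sum_congr rfl fun a ha => by rw [hc a ha], ← sum_div, sum_fiberwise_of_maps_to hp,
    hcard, Nat.cast_mul]
  ring

end Expect

lemma mem_slice {L n : ℕ} {κ : Fin L → ℕ} {ω : Fin n → Fin L} :
    ω ∈ slice L n κ ↔ ∀ ℓ, (xi ℓ ω).card = κ ℓ := by
  simp [slice, xi]

lemma sum_pairs_orderIso {n m : ℕ} {s : Finset (Fin n)} (e : Fin m ≃o s)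
    (F : Fin n → Fin n → ℝ) :
    ∑ p ∈ univ.filter (fun p : Fin m × Fin m => p.1 < p.2), F (e p.1) (e p.2) =
      ∑ q ∈ univ.filter (fun q : Fin n × Fin n => q.1 < q.2),
        if q.1 ∈ s ∧ q.2 ∈ s then F q.1 q.2 else 0 := by
  rw [← sum_filter, filter_filter]
  refine sum_bij (fun p _ => ((e p.1 : Fin n), (e p.2 : Fin n))) ?_ ?_ ?_ (fun _ _ => rfl)
  · intro p hp
    simp only [mem_filter, mem_univ, true_and] at hp ⊢
    exact ⟨e.strictMono hp, (e p.1).2, (e p.2).2⟩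
  · intro p _ q _ h
    simp only [Prod.mk.injEq, Subtype.val_inj, e.injective.eq_iff] at h
    exact Prod.ext h.1 h.2
  · rintro ⟨i, j⟩ hq
    simp only [mem_filter, mem_univ, true_and] at hq
    obtain ⟨hij, hi, hj⟩ := hq
    refine ⟨(e.symm ⟨i, hi⟩, e.symm ⟨j, hj⟩), ?_, by simp⟩
    simp only [mem_filter, mem_univ, true_and]
    exact e.symm.lt_iff_lt.2 hij

section FiberMap

variable {k n m : ℕ} {A : Finset (Fin n)} (ℓ : Fin (k + 1)) (e : Fin m ≃o ↥(Aᶜ : Finset (Fin n)))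

-- Parametrizes the fiber `{ξ_ℓ = A}` of `Ω_κ` by `Ω_{κ^{∖ℓ}}` on the positions `Aᶜ`.
def fiberMap (g : Fin m → Fin k) (i : Fin n) : Fin (k + 1) :=
  if h : i ∈ A then ℓ else ℓ.succAbove (g (e.symm ⟨i, mem_compl.2 h⟩))

variable {ℓ e}

lemma fiberMap_of_mem {g : Fin m → Fin k} {i : Fin n} (h : i ∈ A) : fiberMap ℓ e g i = ℓ :=
  dif_pos h

lemma fiberMap_apply (g : Fin m → Fin k) (a : Fin m) :
    fiberMap ℓ e g (e a) = ℓ.succAbove (g a) := by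
  simp [fiberMap, mem_compl.1 (e a).2]

lemma exists_apply_eq_of_notMem {i : Fin n} (h : i ∉ A) : ∃ a, (e a : Fin n) = i :=
  ⟨e.symm ⟨i, mem_compl.2 h⟩, by simp⟩

lemma fiberMap_eq_iff {g : Fin m → Fin k} {i : Fin n} : fiberMap ℓ e g i = ℓ ↔ i ∈ A := by
  refine ⟨fun h => ?_, fiberMap_of_mem⟩
  by_contra hi
  obtain ⟨a, rfl⟩ := exists_apply_eq_of_notMem (e := e) hi
  exact Fin.succAbove_ne ℓ (g a) (by rwa [fiberMap_apply] at h)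

lemma xi_fiberMap (g : Fin m → Fin k) : xi ℓ (fiberMap ℓ e g) = A := by
  ext i
  simp [xi, fiberMap_eq_iff]

lemma card_xi_succAbove_fiberMap (g : Fin m → Fin k) (j : Fin k) :
    (xi (ℓ.succAbove j) (fiberMap ℓ e g)).card = (xi j g).card := by
  symm
  refine card_bij (fun a _ => (e a : Fin n)) ?_ ?_ ?_
  · intro a ha
    simp only [xi, mem_filter, mem_univ, true_and] at ha ⊢
    rw [fiberMap_apply, ha]
  · intro a _ b _ h
    exact e.injective (Subtype.val_injective h)
  · intro i hi
    simp only [xi, mem_filter, mem_univ, true_and] at hi ⊢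
    have hiA : i ∉ A := fun h => Fin.succAbove_ne ℓ j (by rw [← hi, fiberMap_of_mem h])
    obtain ⟨a, rfl⟩ := exists_apply_eq_of_notMem (e := e) hiA
    exact ⟨a, Fin.succAbove_right_injective (by rwa [← fiberMap_apply]), rfl⟩

lemma fiberMap_injective : Function.Injective (fiberMap ℓ e) := by
  intro g g' h
  funext a
  apply Fin.succAbove_right_injective (p := ℓ)
  rw [← fiberMap_apply, ← fiberMap_apply, h]

lemma fiberMap_mem_slice_iff {κ : Fin (k + 1) → ℕ} (hA : A.card = κ ℓ) (g : Fin m → Fin k) :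
    fiberMap ℓ e g ∈ slice (k + 1) n κ ↔ g ∈ slice k m (fun j => κ (ℓ.succAbove j)) := by
  simp only [mem_slice, Fin.forall_iff_succAbove ℓ, xi_fiberMap, hA,
    card_xi_succAbove_fiberMap, true_and]

lemma image_fiberMap_slice {κ : Fin (k + 1) → ℕ} (hA : A.card = κ ℓ) :
    (slice k m (fun j => κ (ℓ.succAbove j))).image (fiberMap ℓ e) =
      (slice (k + 1) n κ).filter fun ω => xi ℓ ω = A := by
  ext ω
  simp only [mem_image, mem_filter]
  constructor
  · rintro ⟨g, hg, rfl⟩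
    exact ⟨(fiberMap_mem_slice_iff hA g).2 hg, xi_fiberMap g⟩
  · rintro ⟨hω, rfl⟩
    have hne (a : Fin m) : ω (e a) ≠ ℓ := by
      simpa [xi] using mem_compl.1 (e a).2
    choose g hg using fun a => Fin.exists_succAbove_eq (hne a)
    have hωg : fiberMap ℓ e g = ω := by
      funext i
      by_cases hi : i ∈ xi ℓ ω
      · rw [fiberMap_of_mem hi]
        exact ((mem_filter.1 hi).2).symm
      · obtain ⟨a, rfl⟩ := exists_apply_eq_of_notMem (e := e) hi
        rw [fiberMap_apply, hg]
    exact ⟨g, (fiberMap_mem_slice_iff hA g).1 (hωg ▸ hω), hωg⟩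

lemma fiberMap_comp_swap (g : Fin m → Fin k) (a b : Fin m) :
    fiberMap ℓ e (g ∘ Equiv.swap a b) =
      fiberMap ℓ e g ∘ Equiv.swap (e a : Fin n) (e b : Fin n) := by
  funext i
  by_cases hi : i ∈ A
  · have hfix : Equiv.swap (e a : Fin n) (e b) i = i :=
      Equiv.swap_apply_of_ne_of_ne (fun h => mem_compl.1 (e a).2 (h ▸ hi))
        (fun h => mem_compl.1 (e b).2 (h ▸ hi))
    simp only [Function.comp_apply, hfix, fiberMap_of_mem hi]
  · obtain ⟨c, rfl⟩ := exists_apply_eq_of_notMem (e := e) hi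
    have he : Function.Injective fun a => (e a : Fin n) :=
      Subtype.val_injective.comp e.injective
    simp only [Function.comp_apply, he.swap_apply, fiberMap_apply]

lemma grad_comp_fiberMap (h : (Fin n → Fin (k + 1)) → ℝ) (a b : Fin m) (g : Fin m → Fin k) :
    grad a b (fun g' => h (fiberMap ℓ e g')) g = grad (e a) (e b) h (fiberMap ℓ e g) := by
  rw [grad, grad, fiberMap_comp_swap]

end FiberMap

noncomputable def offColorEnergy {L n : ℕ} (ℓ : Fin L) (h : (Fin n → Fin L) → ℝ)
    (ω : Fin n → Fin L) : ℝ :=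
  ∑ p ∈ univ.filter (fun p : Fin n × Fin n => p.1 < p.2),
    if ω p.1 ≠ ℓ ∧ ω p.2 ≠ ℓ then grad p.1 p.2 h ω * grad p.1 p.2 h ω else 0

lemma offColorEnergy_nonneg {L n : ℕ} (ℓ : Fin L) (h : (Fin n → Fin L) → ℝ)
    (ω : Fin n → Fin L) : 0 ≤ offColorEnergy ℓ h ω :=
  sum_nonneg fun _ _ => by split_ifs; exacts [mul_self_nonneg _, le_rfl]

lemma dirichlet_comp_fiberMap {k n m : ℕ} {A : Finset (Fin n)} (ℓ : Fin (k + 1))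
    (e : Fin m ≃o ↥(Aᶜ : Finset (Fin n))) (s : Finset (Fin m → Fin k))
    (h : (Fin n → Fin (k + 1)) → ℝ) :
    dirichlet s (fun g => h (fiberMap ℓ e g)) (fun g => h (fiberMap ℓ e g)) =
      1 / (2 * (m : ℝ)) * expect (s.image (fiberMap ℓ e)) (offColorEnergy ℓ h) := by
  have hinj : Set.InjOn (fiberMap ℓ e) s := fiberMap_injective.injOn
  rw [dirichlet]
  congr 1
  calc ∑ p ∈ univ.filter (fun p : Fin m × Fin m => p.1 < p.2),
        expect s (fun g => grad p.1 p.2 (fun g' => h (fiberMap ℓ e g')) g *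
          grad p.1 p.2 (fun g' => h (fiberMap ℓ e g')) g)
      = ∑ p ∈ univ.filter (fun p : Fin m × Fin m => p.1 < p.2),
          expect (s.image (fiberMap ℓ e))
            (fun ω => grad (e p.1) (e p.2) h ω * grad (e p.1) (e p.2) h ω) := by
        simp only [expect_image hinj, grad_comp_fiberMap]
    _ = ∑ q ∈ univ.filter (fun q : Fin n × Fin n => q.1 < q.2),
          expect (s.image (fiberMap ℓ e)) (fun ω =>
            if q.1 ∈ Aᶜ ∧ q.2 ∈ Aᶜ then grad q.1 q.2 h ω * grad q.1 q.2 h ω else 0) := by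
        rw [sum_pairs_orderIso e fun i j =>
          expect (s.image (fiberMap ℓ e)) fun ω => grad i j h ω * grad i j h ω]
        simp only [expect_ite]
    _ = expect (s.image (fiberMap ℓ e)) (offColorEnergy ℓ h) := by
        rw [← expect_sum]
        refine expect_congr fun ω hω => ?_
        obtain ⟨g, -, rfl⟩ := mem_image.1 hω
        simp only [offColorEnergy, mem_compl, ne_eq, fiberMap_eq_iff]

lemma entropy_fiber_le {k n m : ℕ} {κ : Fin (k + 1) → ℕ} {ℓ : Fin (k + 1)} {A : Finset (Fin n)}
    (hA : A.card = κ ℓ) (hm : Aᶜ.card = m) {τ : ℝ}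
    (hτ : IsLogSobolevConst (slice k m (fun j => κ (ℓ.succAbove j))) τ)
    {f : (Fin n → Fin (k + 1)) → ℝ} (hf : ∀ ω, 0 ≤ f ω) :
    entropy ((slice (k + 1) n κ).filter fun ω => xi ℓ ω = A) f ≤
      τ * (1 / (2 * (m : ℝ)) * expect ((slice (k + 1) n κ).filter fun ω => xi ℓ ω = A)
        (offColorEnergy ℓ fun ω => Real.sqrt (f ω))) := by
  let e := Aᶜ.orderIsoOfFin hm
  rw [← image_fiberMap_slice (e := e) hA, entropy_image fiberMap_injective.injOn,
    ← dirichlet_comp_fiberMap]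
  exact hτ _ fun g => hf _

lemma card_fiber {k n : ℕ} {κ : Fin (k + 1) → ℕ} {ℓ : Fin (k + 1)} {A : Finset (Fin n)}
    (hA : A.card = κ ℓ) :
    ((slice (k + 1) n κ).filter fun ω => xi ℓ ω = A).card =
      (slice k (n - κ ℓ) (fun j => κ (ℓ.succAbove j))).card := by
  have hm : Aᶜ.card = n - κ ℓ := by rw [card_compl, Fintype.card_fin, hA]
  rw [← image_fiberMap_slice (e := Aᶜ.orderIsoOfFin hm) hA,
    card_image_of_injective _ fiberMap_injective]

lemma average_entropy_fiber_le {k n : ℕ} {κ : Fin (k + 1) → ℕ} {ℓ : Fin (k + 1)}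
    (hκn : κ ℓ < n) {τ : ℝ}
    (hτ : IsLogSobolevConst (slice k (n - κ ℓ) (fun j => κ (ℓ.succAbove j))) τ)
    {f : (Fin n → Fin (k + 1)) → ℝ} (hf : ∀ ω, 0 ≤ f ω) :
    (1 - (κ ℓ : ℝ) / n) * (1 / (n.choose (κ ℓ) : ℝ) *
      ∑ A ∈ powersetCard (κ ℓ) (univ : Finset (Fin n)),
        entropy ((slice (k + 1) n κ).filter fun ω => xi ℓ ω = A) f) ≤
      τ * (1 / (2 * (n : ℝ)) *
        expect (slice (k + 1) n κ) (offColorEnergy ℓ fun ω => Real.sqrt (f ω))) := by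
  set c : ℝ := τ * (1 / (2 * ((n - κ ℓ : ℕ) : ℝ)))
  have hfiber : ∀ A ∈ powersetCard (κ ℓ) (univ : Finset (Fin n)),
      entropy ((slice (k + 1) n κ).filter fun ω => xi ℓ ω = A) f ≤
        c * expect ((slice (k + 1) n κ).filter fun ω => xi ℓ ω = A)
          (offColorEnergy ℓ fun ω => Real.sqrt (f ω)) := by
    intro A hA
    rw [mem_powersetCard_univ] at hA
    rw [mul_assoc]
    exact entropy_fiber_le hA (by rw [card_compl, Fintype.card_fin, hA]) hτ hf
  have havg : 1 / (n.choose (κ ℓ) : ℝ) * ∑ A ∈ powersetCard (κ ℓ) (univ : Finset (Fin n)),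
      expect ((slice (k + 1) n κ).filter fun ω => xi ℓ ω = A)
        (offColorEnergy ℓ fun ω => Real.sqrt (f ω)) =
      expect (slice (k + 1) n κ) (offColorEnergy ℓ fun ω => Real.sqrt (f ω)) := by
    rw [← average_expect_fiber (fun ω hω => mem_powersetCard_univ.2 (mem_slice.1 hω ℓ))
      fun A hA => card_fiber (mem_powersetCard_univ.1 hA)]
    rw [card_powersetCard, card_univ, Fintype.card_fin]
  have hweight : (1 - (κ ℓ : ℝ) / n) * c = τ * (1 / (2 * (n : ℝ))) := by
    have hn : (n : ℝ) ≠ 0 := Nat.cast_ne_zero.2 (by omega)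
    have hnκ : (n : ℝ) - κ ℓ ≠ 0 := sub_ne_zero.2 (by exact_mod_cast hκn.ne')
    simp only [c, Nat.cast_sub hκn.le]
    field_simp
  have hcoef : 0 ≤ 1 - (κ ℓ : ℝ) / n :=
    sub_nonneg.2 (div_le_one_of_le₀ (by exact_mod_cast hκn.le) (Nat.cast_nonneg n))
  calc _ ≤ (1 - (κ ℓ : ℝ) / n) * (1 / (n.choose (κ ℓ) : ℝ) *
        ∑ A ∈ powersetCard (κ ℓ) (univ : Finset (Fin n)),
          c * expect ((slice (k + 1) n κ).filter fun ω => xi ℓ ω = A)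
            (offColorEnergy ℓ fun ω => Real.sqrt (f ω))) := by
        gcongr with A hA
        exact hfiber A hA
    _ = _ := by rw [← mul_sum, ← havg, ← mul_assoc τ, ← hweight]; ring

lemma grad_eq_zero_of_apply_eq {L n : ℕ} {ω : Fin n → Fin L} {i j : Fin n} (hij : ω i = ω j)
    (F : (Fin n → Fin L) → ℝ) : grad i j F ω = 0 := by
  have hfix : ω ∘ Equiv.swap i j = ω := by
    funext x
    simp only [Function.comp_apply, Equiv.swap_apply_def]
    split_ifs <;> simp_all
  rw [grad, hfix, sub_self]

lemma sum_ite_ne_and_ne {L : ℕ} {a b : Fin L} (hab : a ≠ b) (x : ℝ) :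
    ∑ c : Fin L, (if a ≠ c ∧ b ≠ c then x else 0) = ((L : ℝ) - 2) * x := by
  have hfilter : univ.filter (fun c => a ≠ c ∧ b ≠ c) = ({a, b} : Finset (Fin L))ᶜ := by
    ext c
    simp [eq_comm]
  have hL : 2 ≤ L := by simpa [card_pair hab] using card_le_univ ({a, b} : Finset (Fin L))
  rw [sum_ite, sum_const_zero, add_zero, sum_const, nsmul_eq_mul, hfilter, card_compl,
    card_pair hab, Fintype.card_fin, Nat.cast_sub hL, Nat.cast_two]

lemma sum_offColorEnergy {L n : ℕ} (h : (Fin n → Fin L) → ℝ) (ω : Fin n → Fin L) :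
    ∑ ℓ, offColorEnergy ℓ h ω = ((L : ℝ) - 2) *
      ∑ p ∈ univ.filter (fun p : Fin n × Fin n => p.1 < p.2),
        grad p.1 p.2 h ω * grad p.1 p.2 h ω := by
  simp only [offColorEnergy]
  rw [sum_comm, mul_sum]
  refine sum_congr rfl fun p _ => ?_
  by_cases hp : ω p.1 = ω p.2
  · simp [grad_eq_zero_of_apply_eq hp]
  · exact sum_ite_ne_and_ne hp _

lemma sum_expect_offColorEnergy {L n : ℕ} (Ω : Finset (Fin n → Fin L))
    (h : (Fin n → Fin L) → ℝ) :
    1 / (2 * (n : ℝ)) * ∑ ℓ, expect Ω (offColorEnergy ℓ h) = ((L : ℝ) - 2) * dirichlet Ω h h := by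
  rw [← expect_sum, funext (sum_offColorEnergy h), expect_const_mul, expect_sum, dirichlet]
  ring

/-- first conditional-entropy estimate (bound on `Σ_ℓ (1-κ_ℓ/n) E[Ent(f|ξ_ℓ)]`). -/
theorem multislice_first_estimate
    (L : ℕ) (hL : 2 ≤ L) (κ : Fin L → ℕ) (hκ : ∀ ℓ, 0 < κ ℓ)
    (n : ℕ) (hn : n = ∑ ℓ, κ ℓ)
    (τ : Fin L → ℝ)
    (hτ : ∀ ℓ, ∀ g : (Fin (n - κ ℓ) → Fin (L - 1)) → ℝ, (∀ ω, 0 ≤ g ω) →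
      entropy (slice (L - 1) (n - κ ℓ) (removeIdx κ ℓ)) g ≤
        τ ℓ * dirichlet (slice (L - 1) (n - κ ℓ) (removeIdx κ ℓ))
          (fun ω => Real.sqrt (g ω)) (fun ω => Real.sqrt (g ω)))
    (f : (Fin n → Fin L) → ℝ) (hf : ∀ ω, 0 ≤ f ω) :
    ∑ ℓ : Fin L, (1 - (κ ℓ : ℝ) / (n : ℝ)) *
      ((1 / (n.choose (κ ℓ) : ℝ)) *
        ∑ A ∈ Finset.powersetCard (κ ℓ) (Finset.univ : Finset (Fin n)),
          entropy ((slice L n κ).filter fun ω => xi ℓ ω = A) f) ≤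
      ((L : ℝ) - 2) * (Finset.univ.sup' ⟨⟨0, by omega⟩, Finset.mem_univ _⟩ τ) *
        dirichlet (slice L n κ) (fun ω => Real.sqrt (f ω)) (fun ω => Real.sqrt (f ω)) := by
  obtain ⟨k, rfl⟩ : ∃ k, L = k + 1 := ⟨L - 1, by omega⟩
  have hκn (ℓ : Fin (k + 1)) : κ ℓ < n :=
    hn ▸ single_lt_sum (ℓ.succAbove_ne ⟨0, by omega⟩) (mem_univ _) (mem_univ _) (hκ _)
      fun _ _ _ => Nat.zero_le _
  have hτ' (ℓ : Fin (k + 1)) :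
      IsLogSobolevConst (slice k (n - κ ℓ) fun j => κ (ℓ.succAbove j)) (τ ℓ) := by
    rw [← removeIdx_eq_succAbove]
    exact hτ ℓ
  calc _ ≤ ∑ ℓ, τ ℓ * (1 / (2 * (n : ℝ)) *
          expect (slice (k + 1) n κ) (offColorEnergy ℓ fun ω => Real.sqrt (f ω))) :=
        sum_le_sum fun ℓ _ => average_entropy_fiber_le (hκn ℓ) (hτ' ℓ) hf
    _ ≤ ∑ ℓ, univ.sup' univ_nonempty τ * (1 / (2 * (n : ℝ)) *
          expect (slice (k + 1) n κ) (offColorEnergy ℓ fun ω => Real.sqrt (f ω))) := by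
        gcongr with ℓ
        · exact mul_nonneg (by positivity) (expect_nonneg fun ω _ => offColorEnergy_nonneg ℓ _ ω)
        · exact le_sup' τ (mem_univ ℓ)
    _ = _ := by rw [← mul_sum, ← mul_sum, sum_expect_offColorEnergy]; ring

end Multislice
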